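/- arXiv:0901.1911 — 2 statements merged into one kernel-verified Lean document; each statement's English description precedes it below -/
import Mathlib

section
/- For a continuous probability density f on ℝ that is symmetric about m (i.e., f(m - w) = f(m + w) for all w) and unimodal (nondecreasing on (-∞, m], nonincreasing on [m, ∞)), among all intervals [ℓ, u] with ∫_ℓ^u f = 1 - α (0 < α < 1), the symmetric interval [m - w, m + w] with ∫_{m-w}^{m+w} f = 1 - α has minimal length. -/
open MeasureTheory

/-- Pointwise: for `x ≥ m + L/2`, `f x ≤ f (x - L)`. -/
lemma sis_ptwise (f : ℝ → ℝ) (m : ℝ)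
    (hsym : ∀ x, f (m - x) = f (m + x))
    (hanti : AntitoneOn f (Set.Ici m))
    {L x : ℝ} (hL : 0 ≤ L) (hx : m + L / 2 ≤ x) :
    f x ≤ f (x - L) := by
  rcases le_or_gt (x - L) m with h | h
  · have h1 : f (x - L) = f (2 * m - x + L) := by
      have h2 := hsym (m - (x - L))
      have e1 : m - (m - (x - L)) = x - L := by ring
      have e2 : m + (m - (x - L)) = 2 * m - x + L := by ring
      rw [e1, e2] at h2
      exact h2
    rw [h1]
    exact hanti (by simp only [Set.mem_Ici]; linarith)
      (by simp only [Set.mem_Ici]; linarith) (by linarith)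
  · exact hanti (by simp only [Set.mem_Ici]; linarith)
      (by simp only [Set.mem_Ici]; linarith) (by linarith)

/-- A shifted-right interval of length `L` has coverage at most that of the centered one. -/
lemma sis_shifted_le (f : ℝ → ℝ) (m : ℝ)
    (hint : Integrable f)
    (hsym : ∀ x, f (m - x) = f (m + x))
    (hanti : AntitoneOn f (Set.Ici m))
    {L l : ℝ} (hL : 0 ≤ L) (hl : m - L / 2 ≤ l) :
    ∫ x in l..(l + L), f x ≤ ∫ x in (m - L / 2)..(m + L / 2), f x := by
  set a := m - L / 2 with ha
  set b := m + L / 2 with hb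
  have hab : a ≤ b := by simp only [ha, hb]; linarith
  have hl' : m - L / 2 ≤ l := hl
  have hbl : b ≤ l + L := by simp only [hb]; linarith
  have i1 : IntervalIntegrable f volume a l := hint.intervalIntegrable
  have i2 : IntervalIntegrable f volume l (l + L) := hint.intervalIntegrable
  have i3 : IntervalIntegrable f volume a b := hint.intervalIntegrable
  have i4 : IntervalIntegrable f volume b (l + L) := hint.intervalIntegrable
  have add1 : (∫ x in a..l, f x) + ∫ x in l..(l + L), f x = ∫ x in a..(l + L), f x :=
    intervalIntegral.integral_add_adjacent_intervals i1 i2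
  have add2 : (∫ x in a..b, f x) + ∫ x in b..(l + L), f x = ∫ x in a..(l + L), f x :=
    intervalIntegral.integral_add_adjacent_intervals i3 i4
  have key : (∫ x in b..(l + L), f x) ≤ ∫ x in a..l, f x := by
    have sub : (∫ x in a..l, f (x + L)) = ∫ x in b..(l + L), f x := by
      rw [intervalIntegral.integral_comp_add_right f L]
      congr 1
      simp only [ha, hb]; ring
    rw [← sub]
    refine intervalIntegral.integral_mono_on hl ((hint.comp_add_right L).intervalIntegrable)
      hint.intervalIntegrable ?_
    intro x hx
    have h1 : m + L / 2 ≤ x + L := by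
      have := hx.1
      simp only [ha] at this
      linarith
    have := sis_ptwise f m hsym hanti hL h1
    simpa using this
  linarith

/-- Reflection through `m` preserves interval integrals of `f`. -/
lemma sis_reflect (f : ℝ → ℝ) (m : ℝ)
    (hsym : ∀ x, f (m - x) = f (m + x)) (l u : ℝ) :
    (∫ x in l..u, f x) = ∫ x in (2 * m - u)..(2 * m - l), f x := by
  have h : ∀ x : ℝ, f x = f (2 * m - x) := by
    intro x
    have h2 := hsym (x - m)
    have e1 : m - (x - m) = 2 * m - x := by ring
    have e2 : m + (x - m) = x := by ring
    rw [e1, e2] at h2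
    exact h2.symm
  calc (∫ x in l..u, f x) = ∫ x in l..u, f (2 * m - x) := by
        simp_rw [← h]
    _ = ∫ x in (2 * m - u)..(2 * m - l), f x :=
        intervalIntegral.integral_comp_sub_left f (2 * m)

/-- Main result in the case where the interval's center is to the right of `m`. -/
lemma sis_aux (f : ℝ → ℝ) (m α w : ℝ)
    (hα : α ∈ Set.Ioo (0 : ℝ) 1)
    (hnn : ∀ x, 0 ≤ f x) (hint : Integrable f) (htot : ∫ x, f x = 1)
    (hsym : ∀ x, f (m - x) = f (m + x))
    (hmono : MonotoneOn f (Set.Iic m)) (hanti : AntitoneOn f (Set.Ici m))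
    (hw : 0 ≤ w) (hcov : ∫ x in (m - w)..(m + w), f x = 1 - α)
    (l u : ℝ) (hlu : l ≤ u) (h2m : 2 * m ≤ l + u)
    (hcov2 : (∫ x in l..u, f x) = 1 - α) : 2 * w ≤ u - l := by
  by_contra hcon
  push_neg at hcon
  set L := u - l with hLdef
  have hL : 0 ≤ L := by simp only [hLdef]; linarith
  set a := m - L / 2 with ha
  set b := m + L / 2 with hb
  have hab : a ≤ b := by simp only [ha, hb]; linarith
  have hwa : m - w ≤ a := by simp only [ha]; linarith
  have hbw : b ≤ m + w := by simp only [hb]; linarith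
  have hal : a ≤ l := by simp only [ha, hLdef]; linarith
  have hul : u = l + L := by simp only [hLdef]; ring
  -- coverage of the centered interval of length L is at least 1 - α
  have h1 : 1 - α ≤ ∫ x in a..b, f x := by
    rw [← hcov2, hul]
    exact sis_shifted_le f m hint hsym hanti hL hal
  -- split the symmetric w-interval
  have i1 : IntervalIntegrable f volume (m - w) a := hint.intervalIntegrable
  have i2 : IntervalIntegrable f volume a b := hint.intervalIntegrable
  have i3 : IntervalIntegrable f volume b (m + w) := hint.intervalIntegrable
  have add1 : (∫ x in (m - w)..a, f x) + ∫ x in a..b, f x = ∫ x in (m - w)..b, f x :=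
    intervalIntegral.integral_add_adjacent_intervals i1 i2
  have add2 : (∫ x in (m - w)..b, f x) + ∫ x in b..(m + w), f x
      = ∫ x in (m - w)..(m + w), f x :=
    intervalIntegral.integral_add_adjacent_intervals hint.intervalIntegrable i3
  have t1nn : 0 ≤ ∫ x in (m - w)..a, f x :=
    intervalIntegral.integral_nonneg hwa fun x _ => hnn x
  have t2nn : 0 ≤ ∫ x in b..(m + w), f x :=
    intervalIntegral.integral_nonneg hbw fun x _ => hnn x
  have t1 : (∫ x in (m - w)..a, f x) = 0 := by linarith
  have hS : (∫ x in a..b, f x) = 1 - α := by linarith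
  -- f vanishes on [m - w, a)
  have key : ∀ x, m - w ≤ x → x < a → f x = 0 := by
    intro x hx1 hx2
    have hxa : x ≤ a := le_of_lt hx2
    have hsplit : (∫ t in (m - w)..x, f t) + ∫ t in x..a, f t = ∫ t in (m - w)..a, f t :=
      intervalIntegral.integral_add_adjacent_intervals hint.intervalIntegrable
        hint.intervalIntegrable
    have h0 : 0 ≤ ∫ t in (m - w)..x, f t :=
      intervalIntegral.integral_nonneg hx1 fun t _ => hnn t
    have hle0 : (∫ t in x..a, f t) ≤ 0 := by linarith
    have hconst : f x * (a - x) ≤ ∫ t in x..a, f t := by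
      have := intervalIntegral.integral_mono_on (μ := volume) hxa
        intervalIntegrable_const hint.intervalIntegrable
        (fun t ht => hmono (show x ∈ Set.Iic m by
            simp only [Set.mem_Iic]; simp only [ha] at hx2; linarith)
          (show t ∈ Set.Iic m by
            simp only [Set.mem_Iic]
            have := ht.2
            simp only [ha] at this ⊢; linarith) ht.1)
      simpa [intervalIntegral.integral_const, mul_comm, smul_eq_mul] using this
    have hpos : 0 < a - x := by linarith
    have := hnn x
    nlinarith
  -- f vanishes on Iio a
  have fzero : ∀ x, x < a → f x = 0 := by
    intro x hx
    rcases le_or_gt (m - w) x with h | h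
    · exact key x h hx
    · have hfa : f (m - w) = 0 := by
        refine key (m - w) le_rfl ?_
        simp only [ha]; linarith
      have hle : f x ≤ f (m - w) :=
        hmono (show x ∈ Set.Iic m by simp only [Set.mem_Iic]; linarith)
          (show m - w ∈ Set.Iic m by simp only [Set.mem_Iic]; linarith) (le_of_lt h)
      have := hnn x
      linarith
  -- f vanishes on Ioi b by symmetry
  have fzero' : ∀ x, b < x → f x = 0 := by
    intro x hx
    have h2 := hsym (x - m)
    have e1 : m - (x - m) = 2 * m - x := by ring
    have e2 : m + (x - m) = x := by ring
    rw [e1, e2] at h2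
    rw [← h2]
    refine fzero _ ?_
    simp only [ha, hb] at hx ⊢; linarith
  -- compute the total integral
  have eIio : (∫ x in Set.Iio a, f x) = 0 := by
    rw [setIntegral_congr_fun measurableSet_Iio
      (fun x (hx : x ∈ Set.Iio a) => fzero x hx)]
    simp
  have eIic : (∫ x in Set.Iic a, f x) = 0 := by
    rw [integral_Iic_eq_integral_Iio]; exact eIio
  have eIoi : (∫ x in Set.Ioi b, f x) = 0 := by
    rw [setIntegral_congr_fun measurableSet_Ioi
      (fun x (hx : x ∈ Set.Ioi b) => fzero' x hx)]
    simp
  have hsplitAll : (∫ x in Set.Iic b, f x) + ∫ x in Set.Ioi b, f x = ∫ x, f x :=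
    intervalIntegral.integral_Iic_add_Ioi hint.integrableOn hint.integrableOn
  have hsub : (∫ x in Set.Iic b, f x) - ∫ x in Set.Iic a, f x = ∫ x in a..b, f x :=
    intervalIntegral.integral_Iic_sub_Iic hint.integrableOn hint.integrableOn
  have hα0 := hα.1
  rw [htot] at hsplitAll
  rw [eIic, hS] at hsub
  rw [eIoi] at hsplitAll
  linarith

/-- Among all intervals `[l, u]` with coverage `1 - α` under a symmetric unimodal
probability density `f` with mode `m`, the symmetric interval `[m - w, m + w]`
has minimal length. -/
theorem symmetric_interval_shortest (f : ℝ → ℝ) (m α w : ℝ)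
    (hα : α ∈ Set.Ioo (0 : ℝ) 1)
    (hnn : ∀ x, 0 ≤ f x) (hint : Integrable f) (htot : ∫ x, f x = 1)
    (hsym : ∀ x, f (m - x) = f (m + x))
    (hmono : MonotoneOn f (Set.Iic m)) (hanti : AntitoneOn f (Set.Ici m))
    (hw : 0 ≤ w) (hcov : ∫ x in (m - w)..(m + w), f x = 1 - α) :
    ∀ l u : ℝ, l ≤ u → (∫ x in l..u, f x) = 1 - α → 2 * w ≤ u - l := by
  intro l u hlu hc
  rcases le_total (2 * m) (l + u) with h | h
  · exact sis_aux f m α w hα hnn hint htot hsym hmono hanti hw hcov l u hlu h hc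
  · have h2 : 2 * w ≤ (2 * m - l) - (2 * m - u) := by
      refine sis_aux f m α w hα hnn hint htot hsym hmono hanti hw hcov
        (2 * m - u) (2 * m - l) (by linarith) (by linarith) ?_
      rw [← sis_reflect f m hsym l u]
      exact hc
    linarith
end

section
/- Let ℓ, u : ℝ → ℝ be C² with u(θ₀) > ℓ(θ₀), and let F be a C² CDF with density f satisfying f(ℓ(θ₀)) = f(u(θ₀)) = f₀ > 0 and F(u(θ₀)) - F(ℓ(θ₀)) = 1 - α. Define G(t) = F(u(t)) - F(ℓ(t)), c = G'(θ₀) b + (1/2) G''(θ₀) v, and suppose d^ℓ + d^u = -c/f₀. Then the expected corrected length L = [u(θ₀) - ℓ(θ₀)] + [u'(θ₀) - ℓ'(θ₀)] b + (1/2)[u''(θ₀) - ℓ''(θ₀)] v + d^ℓ + d^u equals u(θ₀) - ℓ(θ₀) - (1/2)[ (f'(u(θ₀))/f₀) u'(θ₀)² - (f'(ℓ(θ₀))/f₀) ℓ'(θ₀)² ] v, which does not involve b. -/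
/-- Bias cancellation for the improved prediction interval: with
`G(t) = F(u(t)) - F(l(t))`, `c = G'(θ₀) b + (1/2) G''(θ₀) v`, equal endpoint densities
`f(l(θ₀)) = f(u(θ₀)) = f₀ > 0` and correction `dl + du = -c/f₀`, the expected corrected
length equals
`u(θ₀) - l(θ₀) - (1/2)[(f'(u₀)/f₀) u'² - (f'(l₀)/f₀) l'²] v`, which does not involve `b`. -/
theorem improved_interval_length_bias_cancellation (F l u : ℝ → ℝ)
    (θ₀ α b v f₀ dl du : ℝ)
    (hF : ContDiff ℝ 2 F) (hl : ContDiff ℝ 2 l) (hu : ContDiff ℝ 2 u)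
    (hlt : l θ₀ < u θ₀) (hf₀ : 0 < f₀)
    (hfl : deriv F (l θ₀) = f₀) (hfu : deriv F (u θ₀) = f₀)
    (hα : α ∈ Set.Ioo (0 : ℝ) 1) (hcov : F (u θ₀) - F (l θ₀) = 1 - α)
    (hd : dl + du
      = -(deriv (fun t => F (u t) - F (l t)) θ₀ * b
          + (1 / 2) * deriv (deriv (fun t => F (u t) - F (l t))) θ₀ * v) / f₀) :
    (u θ₀ - l θ₀) + (deriv u θ₀ - deriv l θ₀) * b
        + (1 / 2) * (deriv (deriv u) θ₀ - deriv (deriv l) θ₀) * v + dl + du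
    = u θ₀ - l θ₀
        - (1 / 2) * ((deriv (deriv F) (u θ₀) / f₀) * (deriv u θ₀) ^ 2
            - (deriv (deriv F) (l θ₀) / f₀) * (deriv l θ₀) ^ 2) * v := by
  have hFd : Differentiable ℝ F := hF.differentiable (by norm_num)
  have hld : Differentiable ℝ l := hl.differentiable (by norm_num)
  have hud : Differentiable ℝ u := hu.differentiable (by norm_num)
  have hF' : ContDiff ℝ 1 (deriv F) := (contDiff_succ_iff_deriv.mp (hF.of_le (by norm_num))).2.2
  have hl' : ContDiff ℝ 1 (deriv l) := (contDiff_succ_iff_deriv.mp (hl.of_le (by norm_num))).2.2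
  have hu' : ContDiff ℝ 1 (deriv u) := (contDiff_succ_iff_deriv.mp (hu.of_le (by norm_num))).2.2
  have hF'd : Differentiable ℝ (deriv F) := hF'.differentiable one_ne_zero
  have hl'd : Differentiable ℝ (deriv l) := hl'.differentiable one_ne_zero
  have hu'd : Differentiable ℝ (deriv u) := hu'.differentiable one_ne_zero
  have hG : deriv (fun t => F (u t) - F (l t))
      = fun t => deriv F (u t) * deriv u t - deriv F (l t) * deriv l t := by
    funext t
    exact ((((hFd (u t)).hasDerivAt.comp t (hud t).hasDerivAt)).sub
      (((hFd (l t)).hasDerivAt.comp t (hld t).hasDerivAt))).deriv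
  have hG2 : deriv (deriv (fun t => F (u t) - F (l t))) θ₀
      = (deriv (deriv F) (u θ₀) * deriv u θ₀ * deriv u θ₀
          + f₀ * deriv (deriv u) θ₀)
        - (deriv (deriv F) (l θ₀) * deriv l θ₀ * deriv l θ₀
          + f₀ * deriv (deriv l) θ₀) := by
    rw [hG]
    have h2 : HasDerivAt (fun t => deriv F (u t) * deriv u t - deriv F (l t) * deriv l t)
        ((deriv (deriv F) (u θ₀) * deriv u θ₀) * deriv u θ₀
            + deriv F (u θ₀) * deriv (deriv u) θ₀
          - ((deriv (deriv F) (l θ₀) * deriv l θ₀) * deriv l θ₀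
            + deriv F (l θ₀) * deriv (deriv l) θ₀)) θ₀ :=
      ((((hF'd (u θ₀)).hasDerivAt.comp θ₀ (hud θ₀).hasDerivAt).mul
          (hu'd θ₀).hasDerivAt).sub
        (((hF'd (l θ₀)).hasDerivAt.comp θ₀ (hld θ₀).hasDerivAt).mul
          (hl'd θ₀).hasDerivAt))
    rw [h2.deriv, hfl, hfu]
  have hG1 : deriv (fun t => F (u t) - F (l t)) θ₀ = f₀ * deriv u θ₀ - f₀ * deriv l θ₀ := by
    rw [hG]; simp [hfl, hfu]
  rw [hG1, hG2] at hd
  have hne : f₀ ≠ 0 := ne_of_gt hf₀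
  rw [add_assoc, hd]
  field_simp
  ring
end
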